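/- Trapping on tails: Let D ≥ 3. There exist constants δ > 0 and C > 0 with the property: if v ∈ 𝓔 is radial and for some R > 0 one has ‖v‖_{𝓔(R)} ≤ δ (where ‖v‖²_{𝓔(R)} = ∫_R^∞ (|∂_r v|² + |v|²/r²) r^{D-1} dr), then the exterior nonlinear energy satisfies E(v; R, ∞) := ∫_R^∞ ( |∂_r v|²/2 − ((D-2)/(2D))|v|^{2D/(D-2)} ) r^{D-1} dr ≥ C ‖v‖²_{𝓔(R)}. -/

import Mathlib

open Real MeasureTheory Set

noncomputable section

/-- The squared exterior energy norm `‖v‖²_{𝓔(R)} = ∫_R^∞ (|∂_r v|² + |v|²/r²) r^{D-1} dr`. -/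
def extNormSq (D : ℕ) (v : ℝ → ℂ) (R : ℝ) : ℝ :=
  ∫ r in Ioi R, (‖deriv v r‖ ^ 2 + ‖v r‖ ^ 2 / r ^ 2) * r ^ ((D : ℝ) - 1)

/-- The exterior nonlinear energy
`E(v; R, ∞) = ∫_R^∞ (|∂_r v|²/2 − ((D-2)/(2D))|v|^{2D/(D-2)}) r^{D-1} dr`. -/
def extNlEnergy (D : ℕ) (v : ℝ → ℂ) (R : ℝ) : ℝ :=
  ∫ r in Ioi R,
    (‖deriv v r‖ ^ 2 / 2 - (((D : ℝ) - 2) / (2 * (D : ℝ))) *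
      ‖v r‖ ^ (2 * (D : ℝ) / ((D : ℝ) - 2))) * r ^ ((D : ℝ) - 1)

/-!
Put `G(r) = ‖v r‖² r^(D-2)`. Its derivative is `2⟪v, v'⟫ r^(D-2) + (D-2)‖v‖² r^(D-3)`, whose
cross term is controlled by the two densities of `‖v‖²_{𝓔(R)}` through weighted AM–GM; so `G'` is
integrable, `G` has a limit at infinity, and that limit vanishes because `G(r)/r` is integrable.
Hence `G(a) = -∫_a^∞ G'`. With weight `1` this gives the radial Sobolev bound
`‖v b‖² b^(D-2) ≤ ‖v‖²_{𝓔(R)}`, and with weight `(D-2)/2` together with `G(R) ≥ 0` the Hardy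
inequality `(D-2)² ∫ ‖v‖² r^(D-3) ≤ 4 ∫ ‖v'‖² r^(D-1)`. The Sobolev bound dominates the potential
term by `‖v‖_{𝓔(R)}^(4/(D-2))` times the Hardy term, which is at most `1/8` of it for
`δ = (1/8)^((D-2)/4)`; the Hardy inequality then lets the kinetic term absorb everything.
-/

open Filter Topology
open scoped RealInnerProductSpace

lemma eq_zero_of_tendsto_of_integrableOn_Ioi_div {f : ℝ → ℝ} {L a : ℝ}
    (hf : Tendsto f atTop (𝓝 L)) (hint : IntegrableOn (fun r => f r / r) (Ioi a)) : L = 0 := by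
  by_contra hL
  obtain ⟨T, hT⟩ := eventually_atTop.1 <|
    (continuous_abs.tendsto L).comp hf |>.eventually_const_le (half_lt_self (abs_pos.2 hL))
  have hdom : IntegrableOn (fun r : ℝ => |L| / 2 * r⁻¹) (Ioi (max a (max T 0))) := by
    refine (IntegrableOn.mono_set hint.norm (Ioi_subset_Ioi (le_max_left _ _))).mono'
      (by fun_prop) ((ae_restrict_iff' measurableSet_Ioi).2 (ae_of_all _ fun r hr => ?_))
    have hr0 : 0 < r := (le_max_right _ _).trans_lt ((le_max_right _ _).trans_lt hr)
    have hrT : T ≤ r := (le_max_left _ _).trans ((le_max_right _ _).trans hr.le)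
    rw [Real.norm_eq_abs, Real.norm_eq_abs, abs_div, abs_of_pos hr0,
      abs_of_nonneg (by positivity), ← div_eq_mul_inv]
    exact div_le_div_of_nonneg_right (hT r hrT) hr0.le
  refine not_integrableOn_Ioi_inv (IntegrableOn.congr_fun (hdom.const_mul (|L| / 2)⁻¹)
    (fun r _ => ?_) measurableSet_Ioi)
  field_simp

lemma eq_neg_integral_Ioi_of_hasDerivAt {G g : ℝ → ℝ} {a : ℝ}
    (hderiv : ∀ r ∈ Ici a, HasDerivAt G (g r) r) (hg : IntegrableOn g (Ioi a))
    (hG : IntegrableOn (fun r => G r / r) (Ioi a)) : G a = -∫ r in Ioi a, g r := by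
  have hlim := tendsto_limUnder_of_hasDerivAt_of_integrableOn_Ioi
    (fun r hr => hderiv r (mem_Ici_of_Ioi hr)) hg
  rw [integral_Ioi_of_hasDerivAt_of_tendsto' hderiv hg hlim,
    eq_zero_of_tendsto_of_integrableOn_Ioi_div hlim hG]
  ring

lemma rpow_two_mul_div_mul_rpow_le {n b d M : ℝ} (hd : 2 < d) (hn : 0 ≤ n) (hb : 0 < b)
    (h : n ^ 2 * b ^ (d - 2) ≤ M) :
    n ^ (2 * d / (d - 2)) * b ^ (d - 1) ≤ M ^ (2 / (d - 2)) * (n ^ 2 * b ^ (d - 3)) := by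
  have hd2 : d - 2 ≠ 0 := by linarith
  have hn' : n ^ (2 * d / (d - 2)) = n ^ 2 * (n ^ 2) ^ (2 / (d - 2)) := by
    rw [← Real.rpow_natCast, ← Real.rpow_mul hn, ← Real.rpow_add' hn (by positivity)]
    congr 1
    field_simp
    push_cast
    ring
  have hb' : b ^ (d - 1) = b ^ (d - 3) * (b ^ (d - 2)) ^ (2 / (d - 2)) := by
    rw [← Real.rpow_mul hb.le, ← Real.rpow_add hb]
    congr 1
    field_simp
    ring
  calc n ^ (2 * d / (d - 2)) * b ^ (d - 1)
      = (n ^ 2 * b ^ (d - 2)) ^ (2 / (d - 2)) * (n ^ 2 * b ^ (d - 3)) := by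
        rw [hn', hb', Real.mul_rpow (sq_nonneg n) (Real.rpow_nonneg hb.le _)]
        ring
    _ ≤ M ^ (2 / (d - 2)) * (n ^ 2 * b ^ (d - 3)) := by
        gcongr

lemma rpow_two_div_sub_two_le_of_sqrt_le {N c d : ℝ} (hd : 2 < d) (hN : 0 ≤ N) (hc : 0 ≤ c)
    (h : √N ≤ c ^ ((d - 2) / 4)) : N ^ (2 / (d - 2)) ≤ c :=
  calc N ^ (2 / (d - 2)) = √N ^ (4 / (d - 2)) := by
        rw [Real.sqrt_eq_rpow, ← Real.rpow_mul hN]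
        ring_nf
    _ ≤ (c ^ ((d - 2) / 4)) ^ (4 / (d - 2)) :=
        Real.rpow_le_rpow (Real.sqrt_nonneg _) h (div_nonneg zero_le_four (by linarith))
    _ = c := by
        rw [← Real.rpow_mul hc, div_mul_div_comm, mul_comm, div_self (by positivity),
          Real.rpow_one]

section RadialWeights

variable {E : Type*} [NormedAddCommGroup E] [InnerProductSpace ℝ E]

lemma two_mul_abs_inner_mul_rpow_le (x y : E) {r d ε : ℝ} (hr : 0 < r) (hε : 0 < ε) :
    2 * |⟪x, y⟫| * r ^ (d - 2) ≤
      ε * (‖x‖ ^ 2 * r ^ (d - 3)) + ε⁻¹ * (‖y‖ ^ 2 * r ^ (d - 1)) := by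
  have hsq : ∀ s : ℝ, r ^ s = (r ^ (s / 2)) ^ 2 := fun s => by
    rw [← Real.rpow_natCast, ← Real.rpow_mul hr.le]; norm_num
  have hsplit : r ^ (d - 2) = r ^ ((d - 3) / 2) * r ^ ((d - 1) / 2) := by
    rw [← Real.rpow_add hr]; ring_nf
  calc 2 * |⟪x, y⟫| * r ^ (d - 2)
      ≤ 2 * (‖x‖ * ‖y‖) * (r ^ ((d - 3) / 2) * r ^ ((d - 1) / 2)) := by
        rw [hsplit]
        gcongr
        exact abs_real_inner_le_norm x y
    _ = 2 * (‖x‖ * r ^ ((d - 3) / 2)) * (‖y‖ * r ^ ((d - 1) / 2)) := by ring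
    _ ≤ ε * (‖x‖ * r ^ ((d - 3) / 2)) ^ 2 + ε⁻¹ * (‖y‖ * r ^ ((d - 1) / 2)) ^ 2 :=
        two_mul_le_add_mul_sq hε
    _ = ε * (‖x‖ ^ 2 * r ^ (d - 3)) + ε⁻¹ * (‖y‖ ^ 2 * r ^ (d - 1)) := by
        rw [hsq (d - 3), hsq (d - 1)]; ring

lemma le_two_mul_inner_mul_rpow_add (x y : E) {r d ε : ℝ} (hr : 0 < r) (hε : 0 < ε) :
    (d - 2 - ε) * (‖x‖ ^ 2 * r ^ (d - 3)) - ε⁻¹ * (‖y‖ ^ 2 * r ^ (d - 1)) ≤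
      2 * ⟪x, y⟫ * r ^ (d - 2) + (d - 2) * (‖x‖ ^ 2 * r ^ (d - 3)) := by
  have hcross := two_mul_abs_inner_mul_rpow_le x y (d := d) hr hε
  have := mul_le_mul_of_nonneg_right (neg_abs_le ⟪x, y⟫) (Real.rpow_nonneg hr.le (d - 2))
  linarith

lemma hasDerivAt_norm_sq_mul_rpow {v : ℝ → E} {r : ℝ} (d : ℝ) (hr : 0 < r)
    (hv : DifferentiableAt ℝ v r) :
    HasDerivAt (fun t => ‖v t‖ ^ 2 * t ^ (d - 2))
      (2 * ⟪v r, deriv v r⟫ * r ^ (d - 2) + (d - 2) * (‖v r‖ ^ 2 * r ^ (d - 3))) r := by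
  have h : HasDerivAt (fun t => ‖v t‖ ^ 2 * t ^ (d - 2))
      (2 * ⟪v r, deriv v r⟫ * r ^ (d - 2) + ‖v r‖ ^ 2 * ((d - 2) * r ^ (d - 2 - 1))) r :=
    hv.hasDerivAt.norm_sq.mul (Real.hasDerivAt_rpow_const (Or.inl hr.ne'))
  rw [show d - 2 - 1 = d - 3 by ring] at h
  exact h.congr_deriv (by ring)

end RadialWeights

section ExteriorEstimates

variable {E : Type*} [NormedAddCommGroup E] [InnerProductSpace ℝ E] [CompleteSpace E]
  {v : ℝ → E} {d R : ℝ}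

lemma integrableOn_deriv_norm_sq_mul_rpow (hR : 0 < R)
    (hv : ∀ r ∈ Ici R, DifferentiableAt ℝ v r)
    (hK : IntegrableOn (fun r => ‖deriv v r‖ ^ 2 * r ^ (d - 1)) (Ioi R))
    (hH : IntegrableOn (fun r => ‖v r‖ ^ 2 * r ^ (d - 3)) (Ioi R)) :
    IntegrableOn (fun r => 2 * ⟪v r, deriv v r⟫ * r ^ (d - 2) +
      (d - 2) * (‖v r‖ ^ 2 * r ^ (d - 3))) (Ioi R) := by
  have hcv : ContinuousOn v (Ioi R) :=
    continuousOn_of_forall_continuousAt fun r hr => (hv r (mem_Ici_of_Ioi hr)).continuousAt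
  refine Integrable.add ((hH.add hK).mono' ?_ ?_) (hH.const_mul _)
  · exact (aestronglyMeasurable_const.mul ((hcv.aestronglyMeasurable measurableSet_Ioi).inner
      (stronglyMeasurable_deriv v).aestronglyMeasurable)).mul (by fun_prop)
  · refine (ae_restrict_iff' measurableSet_Ioi).2 (ae_of_all _ fun r hr => ?_)
    have hr0 : 0 < r := hR.trans hr
    have := two_mul_abs_inner_mul_rpow_le (v r) (deriv v r) (d := d) hr0 one_pos
    rw [Real.norm_eq_abs, abs_mul, abs_mul, abs_of_pos (Real.rpow_pos_of_pos hr0 _)]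
    simpa using this

lemma norm_sq_mul_rpow_eq_neg_integral (hR : 0 < R)
    (hv : ∀ r ∈ Ici R, DifferentiableAt ℝ v r)
    (hK : IntegrableOn (fun r => ‖deriv v r‖ ^ 2 * r ^ (d - 1)) (Ioi R))
    (hH : IntegrableOn (fun r => ‖v r‖ ^ 2 * r ^ (d - 3)) (Ioi R)) {a : ℝ} (ha : R ≤ a) :
    ‖v a‖ ^ 2 * a ^ (d - 2) = -∫ r in Ioi a, (2 * ⟪v r, deriv v r⟫ * r ^ (d - 2) +
      (d - 2) * (‖v r‖ ^ 2 * r ^ (d - 3))) := by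
  refine eq_neg_integral_Ioi_of_hasDerivAt (fun r hr => hasDerivAt_norm_sq_mul_rpow d
    (hR.trans_le (ha.trans hr)) (hv r (ha.trans hr)))
    ((integrableOn_deriv_norm_sq_mul_rpow hR hv hK hH).mono_set (Ioi_subset_Ioi ha)) ?_
  refine (hH.mono_set (Ioi_subset_Ioi ha)).congr_fun (fun r hr => ?_) measurableSet_Ioi
  rw [mul_div_assoc, ← Real.rpow_sub_one (hR.trans (ha.trans_lt hr)).ne']
  ring_nf

lemma norm_sq_mul_rpow_le_integral (hd : 2 ≤ d) (hR : 0 < R)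
    (hv : ∀ r ∈ Ici R, DifferentiableAt ℝ v r)
    (hK : IntegrableOn (fun r => ‖deriv v r‖ ^ 2 * r ^ (d - 1)) (Ioi R))
    (hH : IntegrableOn (fun r => ‖v r‖ ^ 2 * r ^ (d - 3)) (Ioi R)) {b : ℝ} (hb : R ≤ b) :
    ‖v b‖ ^ 2 * b ^ (d - 2) ≤
      (∫ r in Ioi R, ‖deriv v r‖ ^ 2 * r ^ (d - 1)) + ∫ r in Ioi R, ‖v r‖ ^ 2 * r ^ (d - 3) := by
  have hsub : Ioi b ⊆ Ioi R := Ioi_subset_Ioi hb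
  have hnonneg : ∀ r ∈ Ioi R, 0 ≤ ‖deriv v r‖ ^ 2 * r ^ (d - 1) + ‖v r‖ ^ 2 * r ^ (d - 3) :=
    fun r hr => by have := hR.trans hr; positivity
  rw [norm_sq_mul_rpow_eq_neg_integral hR hv hK hH hb, ← integral_neg, ← integral_add hK hH]
  calc (∫ r in Ioi b, -(2 * ⟪v r, deriv v r⟫ * r ^ (d - 2) + (d - 2) * (‖v r‖ ^ 2 * r ^ (d - 3))))
      ≤ ∫ r in Ioi b, (‖deriv v r‖ ^ 2 * r ^ (d - 1) + ‖v r‖ ^ 2 * r ^ (d - 3)) := by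
        refine setIntegral_mono_on ((integrableOn_deriv_norm_sq_mul_rpow hR hv hK hH).mono_set
          hsub).neg ((hK.add hH).mono_set hsub) measurableSet_Ioi fun r hr => ?_
        have hr0 : 0 < r := hR.trans (hsub hr)
        have hlow := le_two_mul_inner_mul_rpow_add (v r) (deriv v r) (d := d) hr0 one_pos
        have : 0 ≤ (d - 2) * (‖v r‖ ^ 2 * r ^ (d - 3)) := by
          have := sub_nonneg.2 hd; positivity
        rw [inv_one] at hlow
        linarith
    _ ≤ ∫ r in Ioi R, (‖deriv v r‖ ^ 2 * r ^ (d - 1) + ‖v r‖ ^ 2 * r ^ (d - 3)) :=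
        setIntegral_mono_set (hK.add hH)
          ((ae_restrict_iff' measurableSet_Ioi).2 (ae_of_all _ hnonneg)) hsub.eventuallyLE

lemma hardy_setIntegral_Ioi (hd : 2 < d) (hR : 0 < R)
    (hv : ∀ r ∈ Ici R, DifferentiableAt ℝ v r)
    (hK : IntegrableOn (fun r => ‖deriv v r‖ ^ 2 * r ^ (d - 1)) (Ioi R))
    (hH : IntegrableOn (fun r => ‖v r‖ ^ 2 * r ^ (d - 3)) (Ioi R)) :
    (d - 2) ^ 2 * ∫ r in Ioi R, ‖v r‖ ^ 2 * r ^ (d - 3) ≤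
      4 * ∫ r in Ioi R, ‖deriv v r‖ ^ 2 * r ^ (d - 1) := by
  have hd2 : 0 < d - 2 := by linarith
  have hG := integrableOn_deriv_norm_sq_mul_rpow hR hv hK hH
  have hnonpos : ∫ r in Ioi R, (2 * ⟪v r, deriv v r⟫ * r ^ (d - 2) +
      (d - 2) * (‖v r‖ ^ 2 * r ^ (d - 3))) ≤ 0 := by
    have := norm_sq_mul_rpow_eq_neg_integral hR hv hK hH le_rfl
    have : 0 ≤ ‖v R‖ ^ 2 * R ^ (d - 2) := by have := Real.rpow_nonneg hR.le (d - 2); positivity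
    linarith
  have hlower : ∫ r in Ioi R, ((d - 2) / 2 * (‖v r‖ ^ 2 * r ^ (d - 3)) -
      ((d - 2) / 2)⁻¹ * (‖deriv v r‖ ^ 2 * r ^ (d - 1))) ≤
      ∫ r in Ioi R, (2 * ⟪v r, deriv v r⟫ * r ^ (d - 2) + (d - 2) * (‖v r‖ ^ 2 * r ^ (d - 3))) := by
    refine setIntegral_mono_on ((hH.const_mul _).sub (hK.const_mul _)) hG measurableSet_Ioi
      fun r hr => ?_
    have hlow := le_two_mul_inner_mul_rpow_add (v r) (deriv v r) (d := d) (hR.trans hr)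
      (half_pos hd2)
    linarith
  rw [integral_sub (hH.const_mul _) (hK.const_mul _), integral_const_mul,
    integral_const_mul, inv_div] at hlower
  calc (d - 2) ^ 2 * ∫ r in Ioi R, ‖v r‖ ^ 2 * r ^ (d - 3)
      = 2 * (d - 2) * ((d - 2) / 2 * ∫ r in Ioi R, ‖v r‖ ^ 2 * r ^ (d - 3)) := by ring
    _ ≤ 2 * (d - 2) * (2 / (d - 2) * ∫ r in Ioi R, ‖deriv v r‖ ^ 2 * r ^ (d - 1)) :=
        mul_le_mul_of_nonneg_left (by linarith) (by linarith)
    _ = 4 * ∫ r in Ioi R, ‖deriv v r‖ ^ 2 * r ^ (d - 1) := by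
        field_simp
        ring

lemma setIntegral_norm_rpow_le (hd : 2 < d) (hR : 0 < R)
    (hv : ∀ r ∈ Ici R, DifferentiableAt ℝ v r)
    (hK : IntegrableOn (fun r => ‖deriv v r‖ ^ 2 * r ^ (d - 1)) (Ioi R))
    (hH : IntegrableOn (fun r => ‖v r‖ ^ 2 * r ^ (d - 3)) (Ioi R))
    (hP : IntegrableOn (fun r => ‖v r‖ ^ (2 * d / (d - 2)) * r ^ (d - 1)) (Ioi R)) :
    ∫ r in Ioi R, ‖v r‖ ^ (2 * d / (d - 2)) * r ^ (d - 1) ≤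
      ((∫ r in Ioi R, ‖deriv v r‖ ^ 2 * r ^ (d - 1)) + ∫ r in Ioi R, ‖v r‖ ^ 2 * r ^ (d - 3)) ^
        (2 / (d - 2)) * ∫ r in Ioi R, ‖v r‖ ^ 2 * r ^ (d - 3) := by
  rw [← integral_const_mul]
  exact setIntegral_mono_on hP (hH.const_mul _) measurableSet_Ioi fun r hr =>
    rpow_two_mul_div_mul_rpow_le hd (norm_nonneg _) (hR.trans hr)
      (norm_sq_mul_rpow_le_integral hd.le hR hv hK hH (le_of_lt hr))

lemma energy_density_eq (d : ℝ) {a b r : ℝ} (hr : 0 < r) :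
    (a + b / r ^ 2) * r ^ (d - 1) = a * r ^ (d - 1) + b * r ^ (d - 3) := by
  rw [show d - 1 = d - 3 + 2 by ring, Real.rpow_add hr, Real.rpow_two]
  field_simp

lemma integrableOn_of_integrableOn_energy_density (hR : 0 < R)
    (hv : ∀ r ∈ Ici R, DifferentiableAt ℝ v r)
    (h : IntegrableOn (fun r => (‖deriv v r‖ ^ 2 + ‖v r‖ ^ 2 / r ^ 2) * r ^ (d - 1)) (Ioi R)) :
    IntegrableOn (fun r => ‖deriv v r‖ ^ 2 * r ^ (d - 1)) (Ioi R) ∧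
      IntegrableOn (fun r => ‖v r‖ ^ 2 * r ^ (d - 3)) (Ioi R) := by
  have hcv : ContinuousOn v (Ioi R) :=
    continuousOn_of_forall_continuousAt fun r hr => (hv r (mem_Ici_of_Ioi hr)).continuousAt
  have hbound : ∀ r ∈ Ioi R, 0 ≤ ‖deriv v r‖ ^ 2 * r ^ (d - 1) ∧ 0 ≤ ‖v r‖ ^ 2 * r ^ (d - 3) ∧
      (‖deriv v r‖ ^ 2 + ‖v r‖ ^ 2 / r ^ 2) * r ^ (d - 1) =
        ‖deriv v r‖ ^ 2 * r ^ (d - 1) + ‖v r‖ ^ 2 * r ^ (d - 3) := fun r hr => by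
    have hr0 := hR.trans hr
    exact ⟨by positivity, by positivity, energy_density_eq d hr0⟩
  constructor
  · refine h.mono' ((stronglyMeasurable_deriv v).aestronglyMeasurable.norm.pow 2 |>.mul
      (by fun_prop)) ((ae_restrict_iff' measurableSet_Ioi).2 (ae_of_all _ fun r hr => ?_))
    obtain ⟨h1, h2, heq⟩ := hbound r hr
    rw [Real.norm_eq_abs, abs_of_nonneg h1, heq]
    linarith
  · refine h.mono' ((hcv.aestronglyMeasurable measurableSet_Ioi).norm.pow 2 |>.mul
      (by fun_prop)) ((ae_restrict_iff' measurableSet_Ioi).2 (ae_of_all _ fun r hr => ?_))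
    obtain ⟨h1, h2, heq⟩ := hbound r hr
    rw [Real.norm_eq_abs, abs_of_nonneg h2, heq]
    linarith

end ExteriorEstimates

lemma extNormSq_eq_add {D : ℕ} {v : ℝ → ℂ} {R : ℝ} (hR : 0 < R)
    (hK : IntegrableOn (fun r => ‖deriv v r‖ ^ 2 * r ^ ((D : ℝ) - 1)) (Ioi R))
    (hH : IntegrableOn (fun r => ‖v r‖ ^ 2 * r ^ ((D : ℝ) - 3)) (Ioi R)) :
    extNormSq D v R = (∫ r in Ioi R, ‖deriv v r‖ ^ 2 * r ^ ((D : ℝ) - 1)) +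
      ∫ r in Ioi R, ‖v r‖ ^ 2 * r ^ ((D : ℝ) - 3) := by
  rw [extNormSq, setIntegral_congr_fun measurableSet_Ioi
    fun r hr => energy_density_eq (D : ℝ) (hR.trans hr), integral_add hK hH]

lemma extNlEnergy_eq_sub {D : ℕ} {v : ℝ → ℂ} {R : ℝ}
    (hK : IntegrableOn (fun r => ‖deriv v r‖ ^ 2 * r ^ ((D : ℝ) - 1)) (Ioi R))
    (hP : IntegrableOn (fun r => ‖v r‖ ^ (2 * (D : ℝ) / ((D : ℝ) - 2)) * r ^ ((D : ℝ) - 1))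
      (Ioi R)) :
    extNlEnergy D v R = (∫ r in Ioi R, ‖deriv v r‖ ^ 2 * r ^ ((D : ℝ) - 1)) / 2 -
      ((D : ℝ) - 2) / (2 * D) *
        ∫ r in Ioi R, ‖v r‖ ^ (2 * (D : ℝ) / ((D : ℝ) - 2)) * r ^ ((D : ℝ) - 1) := by
  rw [extNlEnergy, ← integral_div, ← integral_const_mul, ← integral_sub (hK.div_const _)
    (hP.const_mul _)]
  congr 1 with r
  ring

/-- Trapping on tails: there are `δ, C > 0` such that whenever `‖v‖_{𝓔(R)} ≤ δ` for some
`R > 0`, the exterior nonlinear energy satisfies `E(v; R,∞) ≥ C ‖v‖²_{𝓔(R)}`. -/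
theorem stmt4 (D : ℕ) (hD : 3 ≤ D) :
    ∃ δ > (0 : ℝ), ∃ C > (0 : ℝ), ∀ (v : ℝ → ℂ) (R : ℝ), 0 < R →
      DifferentiableOn ℝ v (Ioi 0) →
      IntegrableOn (fun r => (‖deriv v r‖ ^ 2 + ‖v r‖ ^ 2 / r ^ 2) * r ^ ((D : ℝ) - 1))
        (Ioi R) →
      IntegrableOn (fun r => ‖v r‖ ^ (2 * (D : ℝ) / ((D : ℝ) - 2)) * r ^ ((D : ℝ) - 1))
        (Ioi R) →
      Real.sqrt (extNormSq D v R) ≤ δ →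
      extNlEnergy D v R ≥ C * extNormSq D v R := by
  have hd : (3 : ℝ) ≤ D := by exact_mod_cast hD
  have hd2 : (2 : ℝ) < D := by linarith
  refine ⟨(1 / 8) ^ (((D : ℝ) - 2) / 4), by positivity, 1 / 20, by norm_num,
    fun v R hR hv hInt hP hδ => ?_⟩
  have hv' : ∀ r ∈ Ici R, DifferentiableAt ℝ v r :=
    fun r hr => hv.differentiableAt (Ioi_mem_nhds (hR.trans_le hr))
  obtain ⟨hK, hH⟩ := integrableOn_of_integrableOn_energy_density hR hv' hInt
  have hHardy := hardy_setIntegral_Ioi hd2 hR hv' hK hH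
  have hPot := setIntegral_norm_rpow_le hd2 hR hv' hK hH hP
  rw [ge_iff_le, extNlEnergy_eq_sub hK hP]
  rw [extNormSq_eq_add hR hK hH] at hδ ⊢
  set A := ∫ r in Ioi R, ‖deriv v r‖ ^ 2 * r ^ ((D : ℝ) - 1)
  set B := ∫ r in Ioi R, ‖v r‖ ^ 2 * r ^ ((D : ℝ) - 3)
  set P := ∫ r in Ioi R, ‖v r‖ ^ (2 * (D : ℝ) / ((D : ℝ) - 2)) * r ^ ((D : ℝ) - 1)
  have hA : 0 ≤ A := setIntegral_nonneg measurableSet_Ioi fun r hr => by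
    have := hR.trans hr; positivity
  have hB : 0 ≤ B := setIntegral_nonneg measurableSet_Ioi fun r hr => by
    have := hR.trans hr; positivity
  have hP0 : 0 ≤ P := setIntegral_nonneg measurableSet_Ioi fun r hr => by
    have := hR.trans hr; positivity
  have hsmall : (A + B) ^ (2 / ((D : ℝ) - 2)) ≤ 1 / 8 :=
    rpow_two_div_sub_two_le_of_sqrt_le hd2 (add_nonneg hA hB) (by norm_num) hδ
  have hBA : B ≤ 4 * A := le_trans (le_mul_of_one_le_left hB (by nlinarith)) hHardy
  have hPB : P ≤ 1 / 8 * B := hPot.trans (mul_le_mul_of_nonneg_right hsmall hB)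
  have hcP : ((D : ℝ) - 2) / (2 * D) * P ≤ 1 / 2 * P := by
    refine mul_le_mul_of_nonneg_right ?_ hP0
    rw [div_le_iff₀ (by positivity)]
    linarith
  -- `E ≥ A/2 - B/16 ≥ A/4 ≥ (A + B)/20`, which is where `C = 1/20` comes from.
  linarith
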